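/- Let R and S be integral domains and let j : R → S be an injective ring homomorphism. Assume that R is a local ring of Krull dimension 1 with maximal ideal I, and let g ∈ I be a nonzero element such that j(g) is not a unit of S. Then there exists a prime ideal J of S such that j⁻¹(J) = I; in particular I lies in the image of the induced map Spec S → Spec R. -/

import Mathlib

/-!
A maximal ideal `J` of `S` containing the non-unit `j g` pulls back to a prime of `R` containing
`g ≠ 0`. In a domain of dimension at most one a nonzero prime is maximal, and in a local ring the
only maximal ideal is `I`.
-/

theorem Ideal.isMaximal_comap_of_apply_mem {R S : Type*} [CommRing R] [NoZeroDivisors R]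
    [Ring.KrullDimLE 1 R] [CommRing S] (f : R →+* S) {J : Ideal S} [J.IsPrime] {g : R}
    (hg : g ≠ 0) (hgJ : f g ∈ J) : (J.comap f).IsMaximal := by
  have hne : J.comap f ≠ ⊥ := fun h ↦ hg (by rwa [← Ideal.mem_bot, ← h])
  exact Ideal.IsPrime.isMaximal_of_ne_bot inferInstance hne

theorem IsLocalRing.exists_isPrime_comap_eq_maximalIdeal {R S : Type*} [CommRing R]
    [NoZeroDivisors R] [IsLocalRing R] [Ring.KrullDimLE 1 R] [CommRing S] (f : R →+* S) {g : R}
    (hg : g ≠ 0) (hgu : ¬ IsUnit (f g)) :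
    ∃ J : Ideal S, J.IsPrime ∧ J.comap f = IsLocalRing.maximalIdeal R := by
  obtain ⟨J, hJ, hgJ⟩ := Ideal.exists_le_maximal (Ideal.span {f g})
    (by rwa [Ne, Ideal.span_singleton_eq_top])
  have : (J.comap f).IsMaximal :=
    Ideal.isMaximal_comap_of_apply_mem f hg (hgJ (Ideal.mem_span_singleton_self _))
  exact ⟨J, hJ.isPrime, IsLocalRing.eq_maximalIdeal this⟩

theorem azumaya_stmt0_general {R S : Type*} [CommRing R] [IsDomain R] [CommRing S]
    [IsLocalRing R] (hdim : ringKrullDim R = 1)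
    (j : R →+* S)
    (g : R) (hg0 : g ≠ 0)
    (hgu : ¬ IsUnit (j g)) :
    ∃ J : Ideal S, J.IsPrime ∧ J.comap j = IsLocalRing.maximalIdeal R := by
  have : Ring.KrullDimLE 1 R := Ring.krullDimLE_iff.mpr hdim.le
  exact IsLocalRing.exists_isPrime_comap_eq_maximalIdeal j hg0 hgu

/-- Let `R` and `S` be integral domains and `j : R → S` an injective ring
homomorphism. Assume `R` is a local ring of Krull dimension 1 with maximal ideal `I`, and let
`g ∈ I` be a nonzero element such that `j g` is not a unit of `S`. Then there exists a prime
ideal `J` of `S` with `j⁻¹(J) = I`; in particular `I` lies in the image of `Spec S → Spec R`. -/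
theorem azumaya_stmt0 {R S : Type*} [CommRing R] [IsDomain R] [CommRing S] [IsDomain S]
    [IsLocalRing R] (hdim : ringKrullDim R = 1)
    (j : R →+* S) (hj : Function.Injective j)
    (g : R) (hgI : g ∈ IsLocalRing.maximalIdeal R) (hg0 : g ≠ 0)
    (hgu : ¬ IsUnit (j g)) :
    ∃ J : Ideal S, J.IsPrime ∧ J.comap j = IsLocalRing.maximalIdeal R :=
  azumaya_stmt0_general hdim j g hg0 hgu
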